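/- Hellinger-type stability of Bayesian posteriors under perturbation of the log-likelihood: let $\mu_0$ be a probability measure on a set $U$, and let $\Phi, \Psi: U \to \mathbb{R}$ be measurable with $0 \le \Phi, \Psi \le M$ for some $M < \infty$. Define posteriors $d\mu/d\mu_0 = Z_\mu^{-1} e^{-\Phi}$ and $d\nu/d\mu_0 = Z_\nu^{-1} e^{-\Psi}$ with $Z_\mu = \int e^{-\Phi} d\mu_0$, $Z_\nu = \int e^{-\Psi} d\mu_0$. Then there exists a constant $C = C(M)$, independent of $\Phi$ and $\Psi$, such that the Hellinger distance satisfies $d_{\mathrm{Hell}}(\mu,\nu) \le C \|\Phi - \Psi\|_{L^2_{\mu_0}(U)}$. -/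

import Mathlib

/-!
Write `f = e^{-Φ/2}`, `g = e^{-Ψ/2}`, so that `Z_μ = ‖f‖²` and `Z_ν = ‖g‖²` in `L²(μ₀)`. For nonzero
vectors one has the exact identity
`‖f/‖f‖ - g/‖g‖‖² = (‖f - g‖² - (‖f‖ - ‖g‖)²) / (‖f‖ ‖g‖) ≤ ‖f - g‖² / √(Z_μ Z_ν)`,
so no Cauchy–Schwarz estimate of `|Z_μ - Z_ν|` is needed. Finally `√(Z_μ Z_ν) ≥ e^{-M}`, and
`t ↦ e^{-t/2}` is `1/2`-Lipschitz on `[0, ∞)`, giving `‖f - g‖² ≤ ‖Φ - Ψ‖² / 4`.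
-/

open MeasureTheory Real

lemma abs_exp_neg_sub_exp_neg_le {u v : ℝ} (hu : 0 ≤ u) (hv : 0 ≤ v) :
    |exp (-u) - exp (-v)| ≤ |u - v| := by
  wlog huv : u ≤ v generalizing u v
  · rw [abs_sub_comm, abs_sub_comm u]
    exact this hv hu (le_of_not_ge huv)
  have hsplit : exp (-v) = exp (-u) * exp (-(v - u)) := by rw [← exp_add]; ring_nf
  have htail : 1 - exp (-(v - u)) ≤ v - u := by linarith [add_one_le_exp (-(v - u))]
  have hu1 : exp (-u) ≤ 1 := exp_le_one_iff.2 (by linarith)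
  have hvu : exp (-v) ≤ exp (-u) := exp_le_exp.2 (by linarith)
  rw [abs_of_nonneg (sub_nonneg.2 hvu), abs_of_nonpos (by linarith), hsplit]
  nlinarith [exp_pos (-u), exp_pos (-(v - u))]

section

variable {Ω : Type*} [MeasurableSpace Ω] {μ : Measure Ω}

lemma integral_sq_sub_sqrt_div_integral_le {p q : Ω → ℝ} (hp : Integrable p μ)
    (hq : Integrable q μ) (hp0 : ∀ x, 0 ≤ p x) (hq0 : ∀ x, 0 ≤ q x) (ha : 0 < ∫ x, p x ∂μ)
    (hb : 0 < ∫ x, q x ∂μ) :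
    ∫ x, (√(p x / ∫ y, p y ∂μ) - √(q x / ∫ y, q y ∂μ)) ^ 2 ∂μ ≤
      (∫ x, (√(p x) - √(q x)) ^ 2 ∂μ) / √((∫ x, p x ∂μ) * ∫ x, q x ∂μ) := by
  set a := ∫ x, p x ∂μ
  set b := ∫ x, q x ∂μ
  have hpq : Integrable (fun x => √(p x) * √(q x)) μ := by
    refine (hp.add hq).mono' ?_ (ae_of_all _ fun x => ?_)
    · exact (hp.aestronglyMeasurable.aemeasurable.sqrt.mul
        hq.aestronglyMeasurable.aemeasurable.sqrt).aestronglyMeasurable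
    · rw [norm_of_nonneg (by positivity), Pi.add_apply]
      nlinarith [sq_nonneg (√(p x) - √(q x)), sq_sqrt (hp0 x), sq_sqrt (hq0 x)]
  set s := ∫ x, √(p x) * √(q x) ∂μ
  have hsa : 0 < √a := sqrt_pos.2 ha
  have hsb : 0 < √b := sqrt_pos.2 hb
  have hlhs : ∫ x, (√(p x / a) - √(q x / b)) ^ 2 ∂μ = 2 - 2 * s / (√a * √b) := by
    have h : ∀ x, (√(p x / a) - √(q x / b)) ^ 2 =
        p x / a + q x / b - 2 / (√a * √b) * (√(p x) * √(q x)) := fun x => by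
      rw [sub_sq, sq_sqrt (div_nonneg (hp0 x) ha.le), sq_sqrt (div_nonneg (hq0 x) hb.le),
        sqrt_div (hp0 x), sqrt_div (hq0 x)]
      ring
    simp_rw [h]
    rw [integral_sub (f := fun x => p x / a + q x / b) ((hp.div_const a).add (hq.div_const b))
        (hpq.const_mul _),
      integral_add (hp.div_const a) (hq.div_const b), integral_div, integral_div,
      integral_const_mul, div_self ha.ne', div_self hb.ne']
    ring
  have hrhs : ∫ x, (√(p x) - √(q x)) ^ 2 ∂μ = a + b - 2 * s := by
    have h : ∀ x, (√(p x) - √(q x)) ^ 2 = p x + q x - 2 * (√(p x) * √(q x)) := fun x => by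
      rw [sub_sq, sq_sqrt (hp0 x), sq_sqrt (hq0 x)]; ring
    simp_rw [h]
    rw [integral_sub (f := fun x => p x + q x) (hp.add hq) (hpq.const_mul _),
      integral_add hp hq, integral_const_mul]
  rw [hlhs, hrhs, sqrt_mul ha.le, le_div_iff₀ (by positivity), sub_mul,
    div_mul_cancel₀ _ (by positivity)]
  nlinarith [sq_nonneg (√a - √b), sq_sqrt ha.le, sq_sqrt hb.le]

end

section

variable {Ω : Type*} [MeasurableSpace Ω] {μ : Measure Ω} [IsFiniteMeasure μ] {M : ℝ}
  {Φ Ψ : Ω → ℝ}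

lemma integrable_exp_neg (hΦ : Measurable Φ) (hΦ0 : ∀ x, 0 ≤ Φ x) :
    Integrable (fun x => exp (-Φ x)) μ :=
  .of_bound (measurable_exp.comp hΦ.neg).aestronglyMeasurable 1 (ae_of_all _ fun x => by
    rw [norm_of_nonneg (exp_pos _).le]
    exact exp_le_one_iff.2 (neg_nonpos.2 (hΦ0 x)))

lemma exp_neg_le_integral_exp_neg [IsProbabilityMeasure μ] (hΦ : Measurable Φ)
    (hΦM : ∀ x, Φ x ∈ Set.Icc 0 M) : exp (-M) ≤ ∫ x, exp (-Φ x) ∂μ :=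
  calc exp (-M) = ∫ _, exp (-M) ∂μ := by simp
    _ ≤ ∫ x, exp (-Φ x) ∂μ :=
      integral_mono (integrable_const _) (integrable_exp_neg hΦ fun x => (hΦM x).1)
        fun x => exp_le_exp.2 (neg_le_neg (hΦM x).2)

lemma integral_sq_sub_sqrt_exp_neg_le (hΦ : Measurable Φ) (hΨ : Measurable Ψ)
    (hΦM : ∀ x, Φ x ∈ Set.Icc 0 M) (hΨM : ∀ x, Ψ x ∈ Set.Icc 0 M) :
    ∫ x, (√(exp (-Φ x)) - √(exp (-Ψ x))) ^ 2 ∂μ ≤ (∫ x, (Φ x - Ψ x) ^ 2 ∂μ) / 4 := by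
  have hpt : ∀ x, (√(exp (-Φ x)) - √(exp (-Ψ x))) ^ 2 ≤ (Φ x - Ψ x) ^ 2 / 4 := fun x => by
    rw [← exp_half, ← exp_half, neg_div, neg_div,
      show (Φ x - Ψ x) ^ 2 / 4 = (Φ x / 2 - Ψ x / 2) ^ 2 by ring, sq_le_sq]
    exact abs_exp_neg_sub_exp_neg_le (by linarith [(hΦM x).1]) (by linarith [(hΨM x).1])
  have hbound : Integrable (fun x => (Φ x - Ψ x) ^ 2) μ :=
    .of_bound ((hΦ.sub hΨ).pow_const 2).aestronglyMeasurable (M ^ 2) (ae_of_all _ fun x => by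
      rw [norm_of_nonneg (sq_nonneg _)]
      exact sq_le_sq' (by linarith [(hΦM x).1, (hΨM x).2]) (by linarith [(hΦM x).2, (hΨM x).1]))
  rw [← integral_div]
  refine integral_mono ((hbound.div_const 4).mono' ?_ (ae_of_all _ fun x => ?_))
    (hbound.div_const 4) hpt
  · fun_prop
  · rw [norm_of_nonneg (sq_nonneg _)]
    exact hpt x

end

theorem stmt_19_general {Ω : Type*} [MeasurableSpace Ω] (μ0 : Measure Ω)
    [IsProbabilityMeasure μ0] (M : ℝ) :
    ∃ C : ℝ, 0 < C ∧
      ∀ Φ Ψ : Ω → ℝ, Measurable Φ → Measurable Ψ →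
        (∀ x, Φ x ∈ Set.Icc 0 M) → (∀ x, Ψ x ∈ Set.Icc 0 M) →
        Real.sqrt ((1/2) * ∫ x,
            (Real.sqrt (Real.exp (-Φ x) / ∫ y, Real.exp (-Φ y) ∂μ0) -
              Real.sqrt (Real.exp (-Ψ x) / ∫ y, Real.exp (-Ψ y) ∂μ0)) ^ 2 ∂μ0) ≤
          C * Real.sqrt (∫ x, (Φ x - Ψ x) ^ 2 ∂μ0) := by
  refine ⟨exp (M / 2), exp_pos _, fun Φ Ψ hΦ hΨ hΦM hΨM => ?_⟩
  have hZΦ := exp_neg_le_integral_exp_neg (μ := μ0) hΦ hΦM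
  have hZΨ := exp_neg_le_integral_exp_neg (μ := μ0) hΨ hΨM
  have hZ : exp (-M) ≤ √((∫ x, exp (-Φ x) ∂μ0) * ∫ x, exp (-Ψ x) ∂μ0) := by
    rw [← sqrt_mul_self (exp_pos _).le]
    exact sqrt_le_sqrt (mul_le_mul hZΦ hZΨ (exp_pos _).le ((exp_pos _).le.trans hZΦ))
  have hHell := integral_sq_sub_sqrt_div_integral_le
    (integrable_exp_neg hΦ fun x => (hΦM x).1) (integrable_exp_neg hΨ fun x => (hΨM x).1)
    (fun x => (exp_pos _).le) (fun x => (exp_pos _).le) ((exp_pos _).trans_le hZΦ)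
    ((exp_pos _).trans_le hZΨ)
  have hLip := div_le_div₀ (by positivity)
    (integral_sq_sub_sqrt_exp_neg_le (μ := μ0) hΦ hΨ hΦM hΨM) (exp_pos _) hZ
  rw [exp_neg, div_inv_eq_mul] at hLip
  have hI : 0 ≤ ∫ x, (Φ x - Ψ x) ^ 2 ∂μ0 := integral_nonneg fun x => sq_nonneg _
  have hC : exp (M / 2) ^ 2 = exp M := by rw [← exp_nat_mul]; ring_nf
  calc √((1 / 2) * ∫ x, (√(exp (-Φ x) / ∫ y, exp (-Φ y) ∂μ0) -
        √(exp (-Ψ x) / ∫ y, exp (-Ψ y) ∂μ0)) ^ 2 ∂μ0)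
      ≤ √(exp (M / 2) ^ 2 * ∫ x, (Φ x - Ψ x) ^ 2 ∂μ0) := by
        refine sqrt_le_sqrt ?_
        rw [hC]
        linarith [mul_nonneg (exp_pos M).le hI]
    _ = exp (M / 2) * √(∫ x, (Φ x - Ψ x) ^ 2 ∂μ0) := by
        rw [sqrt_mul (sq_nonneg _), sqrt_sq (exp_pos _).le]

/-- Hellinger-type stability of Bayesian posteriors under perturbation of the log-likelihood:
for any `M ≥ 0` there is a constant `C = C(M)`, independent of `Φ` and `Ψ`, such that for all
measurable `Φ, Ψ : Ω → ℝ` with `0 ≤ Φ, Ψ ≤ M`, the Hellinger distance between the posteriors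
`dμ/dμ₀ = Z_μ⁻¹ e^{-Φ}` and `dν/dμ₀ = Z_ν⁻¹ e^{-Ψ}` is bounded by `C ‖Φ - Ψ‖_{L²_{μ₀}}`. -/
theorem stmt_19 {Ω : Type*} [MeasurableSpace Ω] (μ0 : Measure Ω)
    [IsProbabilityMeasure μ0] (M : ℝ) (hM : 0 ≤ M) :
    ∃ C : ℝ, 0 < C ∧
      ∀ Φ Ψ : Ω → ℝ, Measurable Φ → Measurable Ψ →
        (∀ x, Φ x ∈ Set.Icc 0 M) → (∀ x, Ψ x ∈ Set.Icc 0 M) →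
        Real.sqrt ((1/2) * ∫ x,
            (Real.sqrt (Real.exp (-Φ x) / ∫ y, Real.exp (-Φ y) ∂μ0) -
              Real.sqrt (Real.exp (-Ψ x) / ∫ y, Real.exp (-Ψ y) ∂μ0)) ^ 2 ∂μ0) ≤
          C * Real.sqrt (∫ x, (Φ x - Ψ x) ^ 2 ∂μ0) :=
  stmt_19_general μ0 M
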